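/- arXiv:2506.14088 — 2 statements merged into one kernel-verified Lean document; each statement's English description precedes it below -/
import Mathlib

section
/- Let G be a graph with an edge-coloring f : E → S. Then the following are equivalent: (1) for every cycle C of G and every color i, the number of edges of C with color i is not exactly 1; (2) for every color i and every edge e = {u,v} with f(e) = i, the vertices u and v lie in different connected components of the graph G with all edges of color i removed. -/
open SimpleGraph

namespace SimpleGraph

open Walk

variable {V : Type*} {G : SimpleGraph V}

/-- An edge lies on a cycle iff it is not a bridge; apply this in `G` with every edge of `s` but
`s(u, v)` deleted, whose cycles are the cycles of `G` meeting `s` at most in `s(u, v)`. -/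
theorem reachable_deleteEdges_iff_exists_cycle {s : Set (Sym2 V)} {u v : V} (huv : G.Adj u v)
    (hs : s(u, v) ∈ s) :
    (G.deleteEdges s).Reachable u v ↔
      ∃ (w : V) (C : G.Walk w w), C.IsCycle ∧ s(u, v) ∈ C.edges ∧
        ∀ e ∈ C.edges, e ∈ s → e = s(u, v) := by
  set H := G.deleteEdges (s \ {s(u, v)})
  have hH : H.deleteEdges {s(u, v)} = G.deleteEdges s := by
    rw [deleteEdges_deleteEdges, Set.sdiff_union_self,
      Set.union_eq_left.2 (Set.singleton_subset_iff.2 hs)]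
  have hHadj : H.Adj u v := by simp [H, huv]
  have hHedges (e : Sym2 V) :
      e ∈ H.edgeSet ↔ e ∈ G.edgeSet ∧ (e ∈ s → e = s(u, v)) := by
    simp [H, edgeSet_deleteEdges]
  rw [← hH]
  refine (and_iff_right hHadj).symm.trans ?_
  rw [adj_and_reachable_delete_edges_iff_exists_cycle]
  constructor
  · rintro ⟨w, C, hC, he⟩
    have hsub : ∀ e ∈ C.edges, e ∈ G.edgeSet := fun e he =>
      ((hHedges e).1 (C.edges_subset_edgeSet he)).1
    refine ⟨w, C.transfer G hsub, hC.transfer hsub, by rwa [edges_transfer], fun e he => ?_⟩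
    rw [edges_transfer] at he
    exact ((hHedges e).1 (C.edges_subset_edgeSet he)).2
  · rintro ⟨w, C, hC, he, hCs⟩
    have hsub : ∀ e ∈ C.edges, e ∈ H.edgeSet := fun e he =>
      (hHedges e).2 ⟨C.edges_subset_edgeSet he, hCs e he⟩
    exact ⟨w, C.transfer H hsub, hC.transfer hsub, by rwa [edges_transfer]⟩

end SimpleGraph

theorem stmt3_general {V S : Type*} (G : SimpleGraph V) (f : Sym2 V → S) :
    (∀ (v : V) (C : G.Walk v v), C.IsCycle →
        ∀ i : S, ¬ ∃! e : Sym2 V, e ∈ C.edges ∧ f e = i) ↔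
      (∀ (i : S) (u v : V), G.Adj u v → f s(u, v) = i →
        ¬ (G.deleteEdges {e : Sym2 V | f e = i}).Reachable u v) := by
  constructor
  · intro hcycles i u v huv hf hreach
    obtain ⟨w, C, hC, he, hCi⟩ := (reachable_deleteEdges_iff_exists_cycle huv hf).1 hreach
    exact hcycles w C hC i ⟨s(u, v), ⟨he, hf⟩, fun e ⟨he', hfe⟩ => hCi e he' hfe⟩
  · rintro hcomponents v C hC i ⟨e, ⟨he, hfe⟩, huniq⟩
    induction e using Sym2.ind with
    | _ a b =>
    have hab : G.Adj a b := C.edges_subset_edgeSet he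
    refine hcomponents i a b hab hfe ((reachable_deleteEdges_iff_exists_cycle hab hfe).2 ?_)
    exact ⟨v, C, hC, he, fun e' he' hfe' => huniq e' ⟨he', hfe'⟩⟩

/-- For an edge-coloring `f` of a simple graph `G`, the following are equivalent:
(1) no cycle of `G` contains exactly one edge of any color;
(2) for every edge `e = {u,v}` of color `i`, the vertices `u` and `v` lie in different
connected components of `G` with all edges of color `i` deleted. -/
theorem stmt3 {V S : Type*} [Fintype V] (G : SimpleGraph V) (f : Sym2 V → S) :
    (∀ (v : V) (C : G.Walk v v), C.IsCycle →
        ∀ i : S, ¬ ∃! e : Sym2 V, e ∈ C.edges ∧ f e = i) ↔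
      (∀ (i : S) (u v : V), G.Adj u v → f s(u, v) = i →
        ¬ (G.deleteEdges {e : Sym2 V | f e = i}).Reachable u v) :=
  stmt3_general G f
end

section
/- Let n, k, r be positive integers with gcd(n,k) = 1, k^r ≡ 1 (mod n), n ≥ 3, r ≥ 3. The generalized Petersen graph G(n,k) is isomorphic to the induced subgraph of the Cayley graph Cay(Cₙ ⋊ C_r, {a,b}) on the vertex set {b^i : 0 ≤ i ≤ n−1} ∪ {b^i·a : 0 ≤ i ≤ n−1}, where outer vertex u_i maps to b^i and inner vertex v_i maps to b^i·a. -/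
/-- The Cayley graph of a group `Γ` with connection set `S`. -/
def cayley {Γ : Type*} [Group Γ] (S : Set Γ) : SimpleGraph Γ where
  Adj x y := x ≠ y ∧ (x⁻¹ * y ∈ S ∨ y⁻¹ * x ∈ S)
  symm := by
    constructor
    rintro x y ⟨hxy, h⟩
    exact ⟨hxy.symm, h.symm⟩
  loopless := by constructor; rintro x ⟨hx, -⟩; exact hx rfl

/-- The group homomorphism `AddAut A →* MulAut (Multiplicative A)`. -/
def addAutToMulAut (A : Type*) [AddGroup A] :
    Multiplicative (AddAut A) →* MulAut (Multiplicative A) where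
  toFun e := AddEquiv.toMultiplicative e.toAdd
  map_one' := rfl
  map_mul' _ _ := rfl

/-- The action of `C_r` on `C_n` sending the generator of `C_r` to multiplication
by `k` on `C_n = ZMod n` (written additively), i.e. to `x ↦ x^k` multiplicatively.
This is well defined since `gcd(k,n) = 1` and `k^r ≡ 1 (mod n)`. -/
noncomputable def semiAct (n r k : ℕ) (h : Nat.Coprime k n) (hk : k ^ r ≡ 1 [MOD n]) :
    Multiplicative (ZMod r) →* MulAut (Multiplicative (ZMod n)) :=
  AddMonoidHom.toMultiplicativeLeft
    (ZMod.lift r ⟨zmultiplesHom _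
      (Additive.ofMul (addAutToMulAut (ZMod n) (AddAut.mulLeft (ZMod.unitOfCoprime k h)))), by
        have hu : (ZMod.unitOfCoprime k h) ^ r = 1 := by
          ext
          push_cast
          have : ((k : ZMod n)) ^ r = ((1 : ℕ) : ZMod n) := by
            rw [← Nat.cast_pow, ZMod.natCast_eq_natCast_iff]
            exact hk
          simpa using this
        simp only [zmultiplesHom_apply]
        rw [← ofMul_zpow, ← map_zpow, ← map_zpow]
        norm_cast
        rw [hu]
        simp ⟩)

/-- The semidirect product `C_n ⋊ C_r` where the generator `a` of `C_r` acts on the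
generator `b` of `C_n` by `a * b * a⁻¹ = b^k`. -/
noncomputable abbrev SDP (n r k : ℕ) (h : Nat.Coprime k n) (hk : k ^ r ≡ 1 [MOD n]) :=
  SemidirectProduct (Multiplicative (ZMod n)) (Multiplicative (ZMod r)) (semiAct n r k h hk)

/-- The generator `a` (of order `r`) of `C_n ⋊ C_r`. -/
noncomputable def genA (n r k : ℕ) (h : Nat.Coprime k n) (hk : k ^ r ≡ 1 [MOD n]) :
    SDP n r k h hk :=
  SemidirectProduct.inr (Multiplicative.ofAdd 1)

/-- The generator `b` (of order `n`) of `C_n ⋊ C_r`. -/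
noncomputable def genB (n r k : ℕ) (h : Nat.Coprime k n) (hk : k ^ r ≡ 1 [MOD n]) :
    SDP n r k h hk :=
  SemidirectProduct.inl (Multiplicative.ofAdd 1)

/-- The generalized Petersen graph `G(n,k)`: vertices `Sum.inl i` are the outer
vertices `uᵢ` and vertices `Sum.inr i` are the inner vertices `vᵢ` (indices mod `n`);
edges are `uᵢuᵢ₊₁`, `vᵢvᵢ₊ₖ` and the spokes `uᵢvᵢ`. -/
def GPG (n k : ℕ) : SimpleGraph (ZMod n ⊕ ZMod n) where
  Adj x y := x ≠ y ∧
    (match x, y with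
     | Sum.inl i, Sum.inl j => j = i + 1 ∨ i = j + 1
     | Sum.inr i, Sum.inr j => j = i + (k : ZMod n) ∨ i = j + (k : ZMod n)
     | Sum.inl i, Sum.inr j => i = j
     | Sum.inr i, Sum.inl j => i = j)
  symm := by
    constructor
    rintro (i | i) (j | j) ⟨hne, h⟩ <;>
      refine ⟨Ne.symm hne, ?_⟩ <;> dsimp only at h ⊢ <;> tauto
  loopless := by constructor; rintro x ⟨hx, -⟩; exact hx rfl

/-- The map sending the outer vertex `uᵢ` to `bⁱ` and the inner vertex `vᵢ` to `bⁱ * a`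
in `C_n ⋊ C_r`. -/
noncomputable def embMap (n r k : ℕ) (h : Nat.Coprime k n) (hk : k ^ r ≡ 1 [MOD n]) :
    ZMod n ⊕ ZMod n → SDP n r k h hk
  | Sum.inl i => genB n r k h hk ^ i.val
  | Sum.inr i => genB n r k h hk ^ i.val * genA n r k h hk

/-! Write `⟨x, t⟩` for `bˣ aᵗ`, so that `uᵢ ↦ ⟨i, 0⟩` and `vᵢ ↦ ⟨i, 1⟩`. Two vertices are
adjacent in the Cayley graph iff the quotient `g⁻¹ h` of their images (in one order or the other)
is `a` or `b`. Between outer vertices this quotient is `⟨j - i, 0⟩`, between inner ones it is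
`a⁻¹ bʲ⁻ⁱ a = ⟨k⁻¹ (j - i), 0⟩`, and between an outer and an inner vertex it is `⟨j - i, 1⟩` or
has `a`-part `-1`. Since `r ≥ 3`, the `a`-parts `0`, `1`, `-1` are distinct, so the quotient is a
generator exactly for the edges `uᵢuᵢ₊₁`, `vᵢvᵢ₊ₖ` and `uᵢvᵢ`. -/

open Multiplicative SemidirectProduct

section PetersenCayley

variable (n r k : ℕ) (h : Nat.Coprime k n) (hk : k ^ r ≡ 1 [MOD n])

local notation "Γ" => SDP n r k h hk
local notation "φ" => semiAct n r k h hk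
local notation "S" => ({genA n r k h hk, genB n r k h hk} : Set Γ)

lemma semiAct_ofAdd_one_apply (x : ZMod n) :
    φ (ofAdd 1) (ofAdd x) = ofAdd ((k : ZMod n) * x) := by
  have hcast : ((1 : ℤ) : ZMod r) = 1 := Int.cast_one
  simp only [semiAct, AddMonoidHom.toMultiplicativeLeft_apply_apply, toAdd_ofAdd]
  rw [← hcast, ZMod.lift_coe]
  rfl

lemma semiAct_ofAdd_neg_one_apply_eq_iff (x y : ZMod n) :
    φ (ofAdd (-1)) (ofAdd x) = ofAdd y ↔ x = k * y := by
  rw [ofAdd_neg, map_inv, MulAut.inv_def, MulEquiv.symm_apply_eq, semiAct_ofAdd_one_apply,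
    ofAdd.injective.eq_iff]

lemma mk_mem_gens_iff (l : Multiplicative (ZMod n)) (t : Multiplicative (ZMod r)) :
    (⟨l, t⟩ : Γ) ∈ S ↔ l = 1 ∧ t = ofAdd 1 ∨ l = ofAdd 1 ∧ t = 1 := by
  simp [genA, genB, SemidirectProduct.ext_iff]

section Generators

variable [Nontrivial (ZMod r)]

lemma mk_ofAdd_one_mem_gens_iff (x : ZMod n) : (⟨ofAdd x, 1⟩ : Γ) ∈ S ↔ x = 1 := by
  rw [mk_mem_gens_iff]
  simp [← ofAdd_zero]

lemma mk_ofAdd_ofAdd_one_mem_gens_iff (x : ZMod n) :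
    (⟨ofAdd x, ofAdd 1⟩ : Γ) ∈ S ↔ x = 0 := by
  rw [mk_mem_gens_iff]
  simp

lemma mk_semiAct_mem_gens_iff (x : ZMod n) :
    (⟨φ (ofAdd (-1)) (ofAdd x), 1⟩ : Γ) ∈ S ↔ x = k := by
  rw [mk_mem_gens_iff]
  simp only [semiAct_ofAdd_neg_one_apply_eq_iff, mul_one]
  simp [← ofAdd_zero]

lemma notMem_gens_of_right_eq_ofAdd_neg_one [Fact (2 < r)] {g : Γ}
    (hg : g.right = ofAdd (-1)) : g ∉ S := by
  rintro (rfl | rfl)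
  · exact ZMod.neg_one_ne_one (ofAdd.injective hg).symm
  · exact neg_ne_zero.2 one_ne_zero (ofAdd.injective hg).symm

end Generators

-- `embMap` exponentiates by `ZMod.val`, which is `Int.natAbs` on `ZMod 0 = ℤ`.
variable [NeZero n]

lemma embMap_inl (i : ZMod n) : embMap n r k h hk (.inl i) = ⟨ofAdd i, 1⟩ := by
  simp [embMap, genB, ← map_pow, ← ofAdd_nsmul]

lemma embMap_inr (i : ZMod n) : embMap n r k h hk (.inr i) = ⟨ofAdd i, ofAdd 1⟩ := by
  ext <;> simp [embMap, genA, genB, ← map_pow, ← ofAdd_nsmul]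

lemma embMap_inl_inv_mul_inl (i j : ZMod n) :
    (embMap n r k h hk (.inl i))⁻¹ * embMap n r k h hk (.inl j) = ⟨ofAdd (j - i), 1⟩ := by
  ext <;> simp [embMap_inl, sub_eq_neg_add]

lemma embMap_inl_inv_mul_inr (i j : ZMod n) :
    (embMap n r k h hk (.inl i))⁻¹ * embMap n r k h hk (.inr j) =
      ⟨ofAdd (j - i), ofAdd 1⟩ := by
  ext <;> simp [embMap_inl, embMap_inr, sub_eq_neg_add]

lemma embMap_inr_inv_mul_inl_right (i j : ZMod n) :
    ((embMap n r k h hk (.inr i))⁻¹ * embMap n r k h hk (.inl j)).right = ofAdd (-1) := by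
  simp [embMap_inl, embMap_inr]

lemma embMap_inr_inv_mul_inr (i j : ZMod n) :
    (embMap n r k h hk (.inr i))⁻¹ * embMap n r k h hk (.inr j) =
      ⟨φ (ofAdd (-1)) (ofAdd (j - i)), 1⟩ := by
  ext <;> simp [embMap_inr, sub_eq_neg_add]

variable [Nontrivial (ZMod r)]

lemma embMap_injective : Function.Injective (embMap n r k h hk) := by
  rintro (i | i) (j | j) hij <;>
    simp [embMap_inl, embMap_inr, SemidirectProduct.ext_iff, ← ofAdd_zero] at hij <;> rw [hij]

lemma cayley_adj_embMap_iff [Fact (2 < r)] (x y : ZMod n ⊕ ZMod n) :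
    (cayley S).Adj (embMap n r k h hk x) (embMap n r k h hk y) ↔ (GPG n k).Adj x y := by
  refine and_congr (embMap_injective n r k h hk).ne_iff ?_
  rcases x with i | i <;> rcases y with j | j
  · simp only [embMap_inl_inv_mul_inl, mk_ofAdd_one_mem_gens_iff, sub_eq_iff_eq_add']
  · simp only [embMap_inl_inv_mul_inr, mk_ofAdd_ofAdd_one_mem_gens_iff, sub_eq_zero,
      notMem_gens_of_right_eq_ofAdd_neg_one _ _ _ _ _ (embMap_inr_inv_mul_inl_right ..),
      or_false, eq_comm]
  · simp only [embMap_inl_inv_mul_inr, mk_ofAdd_ofAdd_one_mem_gens_iff, sub_eq_zero,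
      notMem_gens_of_right_eq_ofAdd_neg_one _ _ _ _ _ (embMap_inr_inv_mul_inl_right ..),
      false_or]
  · simp only [embMap_inr_inv_mul_inr, mk_semiAct_mem_gens_iff, sub_eq_iff_eq_add']

noncomputable def gpgCayleyEmbedding [Fact (2 < r)] : GPG n k ↪g cayley S where
  toFun := embMap n r k h hk
  inj' := embMap_injective n r k h hk
  map_rel_iff' := cayley_adj_embMap_iff n r k h hk _ _

end PetersenCayley

theorem stmt10_general (n r k : ℕ) (hn : 3 ≤ n) (hr : 3 ≤ r)
    (h : Nat.Coprime n k) (hk : k ^ r ≡ 1 [MOD n]) :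
    ∃ e : GPG n k ≃g
        ((cayley {genA n r k h.symm hk, genB n r k h.symm hk}).induce
          (Set.range (embMap n r k h.symm hk))),
      (∀ i : ZMod n, (e (Sum.inl i) : SDP n r k h.symm hk) = genB n r k h.symm hk ^ i.val) ∧
      (∀ i : ZMod n, (e (Sum.inr i) : SDP n r k h.symm hk) =
          genB n r k h.symm hk ^ i.val * genA n r k h.symm hk) := by
  have : NeZero n := ⟨by omega⟩
  have : Fact (2 < r) := ⟨hr⟩
  have : Nontrivial (ZMod r) := ZMod.nontrivial_iff.2 (by omega)
  exact ⟨(gpgCayleyEmbedding n r k h.symm hk).isoInduceRange, fun _ ↦ rfl, fun _ ↦ rfl⟩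

/-- For `gcd(n,k) = 1`, `k^r ≡ 1 (mod n)`, `n ≥ 3`, `r ≥ 3` and `0 < k < n/2`, the
generalized Petersen graph `G(n,k)` is isomorphic to the induced subgraph of the Cayley
graph `Cay(C_n ⋊ C_r, {a,b})` on `{bⁱ : 0 ≤ i ≤ n−1} ∪ {bⁱa : 0 ≤ i ≤ n−1}`, via the
map sending `uᵢ` to `bⁱ` and `vᵢ` to `bⁱ * a`. -/
theorem stmt10 (n r k : ℕ) (hn : 3 ≤ n) (hr : 3 ≤ r) (hkpos : 0 < k) (hkn : 2 * k < n)
    (h : Nat.Coprime n k) (hk : k ^ r ≡ 1 [MOD n]) :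
    ∃ e : GPG n k ≃g
        ((cayley {genA n r k h.symm hk, genB n r k h.symm hk}).induce
          (Set.range (embMap n r k h.symm hk))),
      (∀ i : ZMod n, (e (Sum.inl i) : SDP n r k h.symm hk) = genB n r k h.symm hk ^ i.val) ∧
      (∀ i : ZMod n, (e (Sum.inr i) : SDP n r k h.symm hk) =
          genB n r k h.symm hk ^ i.val * genA n r k h.symm hk) :=
  stmt10_general n r k hn hr h hk
end
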